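/- Let H ≥ 1 be a natural number and let φ, φ₁, φ₂, G be real numbers with φ₂ ≥ 0, G ≥ 0, φ ≤ φ₁ + φ₂, and G ≤ φ₁ + φ₂. Define CLIP(ν₁ | ν₂) := ν₁ if ν₁ ≥ ν₂ and 0 otherwise. Then φ ≤ CLIP(φ₁ | G/(H+1)) + (1 + 1/H)·φ₂. -/
import Mathlib

/-- The core arithmetic of the clipping argument: if `H ≥ 1`, `φ₂ ≥ 0`, `G ≥ 0`,
`φ ≤ φ₁ + φ₂` and `G ≤ φ₁ + φ₂`, then with `CLIP(ν₁|ν₂) = ν₁·𝟙{ν₁ ≥ ν₂}`,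
`φ ≤ CLIP(φ₁ | G/(H+1)) + (1 + 1/H)·φ₂`. -/
theorem stmt_4 (H : ℕ) (hH : 1 ≤ H) (φ φ₁ φ₂ G : ℝ)
    (hφ₂ : 0 ≤ φ₂) (hG : 0 ≤ G) (h1 : φ ≤ φ₁ + φ₂) (h2 : G ≤ φ₁ + φ₂) :
    φ ≤ (if G / ((H : ℝ) + 1) ≤ φ₁ then φ₁ else 0) + (1 + 1 / (H : ℝ)) * φ₂ := by
  have hHpos : (0:ℝ) < H := by exact_mod_cast hH
  have hH1 : (0:ℝ) < (H:ℝ) + 1 := by linarith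
  have hinv : 0 ≤ 1 / (H:ℝ) := by positivity
  split_ifs with h
  · nlinarith [mul_nonneg hinv hφ₂]
  · push_neg at h
    rw [lt_div_iff₀ hH1] at h
    have key : G / ((H:ℝ) + 1) ≤ φ₂ / H := by
      rw [div_le_div_iff₀ hH1 hHpos]
      nlinarith
    have hd : φ₂ / H = 1 / (H:ℝ) * φ₂ := by ring
    have hle : φ₁ ≤ G / ((H:ℝ) + 1) := by
      rw [le_div_iff₀ hH1]; linarith [h.le]
    nlinarith [key, hd, hle]
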